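/- arXiv:1903.01098 — 6 statements merged into one kernel-verified Lean document; each statement's English description precedes it below -/
import Mathlib

section
/- For an odd prime p = 2n+1, the product over 1 ≤ i < j ≤ n of (j² - i²) is congruent to -n! modulo p if p ≡ 1 (mod 4), and congruent to 1 modulo p if p ≡ 3 (mod 4). -/
/-!
For `j ≥ 1`, `j * ∏_{i<j} (j² - i²) = j * (j-1)! * (j+1)(j+2)⋯(2j-1) = (2j-1)!`, so `n!` times
the product is `∏_{j=1}^n (2j-1)!`. By Wilson's theorem `k! (p-1-k)! ≡ (-1)^(k+1) (mod p)`, so the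
factors for `j` and `n+1-j` multiply to `1`, and only the middle factor `n!` survives when `n` is
odd. When `n` is even, `p ≡ 1 (mod 4)` and `n!² ≡ -1`, so dividing by `n!` gives `-n!`.
-/

open Finset Nat

namespace Finset

theorem prod_Icc_one_eq_prod_range {M : Type*} [CommMonoid M] (f : ℕ → M) (n : ℕ) :
    ∏ j ∈ Icc 1 n, f j = ∏ m ∈ range n, f (m + 1) := by
  rw [← Ico_add_one_right_eq_Icc, prod_Ico_eq_prod_range, Nat.add_sub_cancel]
  simp only [add_comm 1]

theorem prod_range_two_mul_add_of_mul_reflect_eq_one {M : Type*} [CommMonoid M] (g : ℕ → M)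
    (k r : ℕ) (h : ∀ j < k, g j * g (2 * k + r - 1 - j) = 1) :
    ∏ j ∈ range (2 * k + r), g j = ∏ j ∈ range r, g (k + j) := by
  have hreflect : ∏ j ∈ range k, g (k + (r + j)) = ∏ j ∈ range k, g (2 * k + r - 1 - j) := by
    rw [← prod_range_reflect]
    exact prod_congr rfl fun j hj => by rw [mem_range] at hj; congr 1; omega
  rw [show 2 * k + r = k + (r + k) by ring, prod_range_add, prod_range_add, hreflect,
    mul_left_comm, ← prod_mul_distrib, prod_congr rfl fun j hj => h j (mem_range.1 hj),
    prod_const_one, mul_one]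

end Finset

theorem ZMod.factorial_mul_factorial_eq_neg_one_pow {p : ℕ} [Fact p.Prime] {k l : ℕ}
    (h : k + l + 1 = p) : (k ! * l ! : ZMod p) = (-1) ^ (l + 1) := by
  have hasc : ((k + 1).ascFactorial l : ZMod p) = (-1) ^ l * l ! := by
    rw [ascFactorial_eq_prod_range, ← prod_range_reflect, ← prod_range_add_one_eq_factorial,
      Nat.cast_prod, Nat.cast_prod, show (-1 : ZMod p) ^ l = (-1) ^ #(range l) by simp,
      ← prod_neg]
    refine prod_congr rfl fun i hi => ?_
    rw [mem_range] at hi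
    rw [eq_neg_iff_add_eq_zero, ← Nat.cast_add, ZMod.natCast_eq_zero_iff]
    exact ⟨1, by omega⟩
  have hwilson := ZMod.wilsons_lemma p
  rw [show p - 1 = k + l by omega, ← factorial_mul_ascFactorial, Nat.cast_mul, hasc] at hwilson
  have hsign : ((-1 : ZMod p) ^ l) ^ 2 = 1 := by rw [← pow_mul, pow_mul', neg_one_sq, one_pow]
  linear_combination (-1 : ZMod p) ^ l * hwilson - (k ! * l ! : ZMod p) * hsign

theorem mul_prod_Icc_sq_sub_sq_eq_factorial (m : ℕ) :
    ((m : ℤ) + 1) * ∏ i ∈ Icc 1 m, (((m : ℤ) + 1) ^ 2 - (i : ℤ) ^ 2) = (2 * m + 1)! := by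
  have hterm : ∀ i ∈ range m,
      ((m : ℤ) + 1) ^ 2 - ((i + 1 : ℕ) : ℤ) ^ 2 = ((m - i) * (m + 2 + i) : ℕ) := by
    intro i hi
    push_cast [Nat.cast_sub (mem_range.1 hi).le]
    ring
  rw [prod_Icc_one_eq_prod_range, prod_congr rfl hterm, ← Nat.cast_prod, prod_mul_distrib,
    ← descFactorial_eq_prod_range, descFactorial_self, ← ascFactorial_eq_prod_range,
    ← Nat.cast_succ, ← Nat.cast_mul, ← mul_assoc, ← factorial_succ, factorial_mul_ascFactorial,
    show m + 1 + m = 2 * m + 1 by ring]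

theorem factorial_mul_prod_sq_sub_sq (n : ℕ) :
    (n ! : ℤ) * ∏ j ∈ Icc 1 n, ∏ i ∈ Icc 1 (j - 1), ((j : ℤ) ^ 2 - (i : ℤ) ^ 2) =
      ∏ m ∈ range n, ((2 * m + 1)! : ℤ) := by
  rw [← prod_range_add_one_eq_factorial, Nat.cast_prod, prod_Icc_one_eq_prod_range,
    ← prod_mul_distrib]
  exact prod_congr rfl fun m _ => by simpa using mul_prod_Icc_sq_sub_sq_eq_factorial m

theorem ZMod.prod_range_factorial_two_mul_add_one {p n : ℕ} [Fact p.Prime]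
    (hpn : p = 2 * n + 1) :
    ∏ m ∈ range n, ((2 * m + 1)! : ZMod p) = if Even n then 1 else (n ! : ZMod p) := by
  have hpair : ∀ j < n, ((2 * j + 1)! * (2 * (n - 1 - j) + 1)! : ZMod p) = 1 := fun j hj => by
    rw [ZMod.factorial_mul_factorial_eq_neg_one_pow (by omega)]
    exact Even.neg_one_pow ⟨n - j, by omega⟩
  obtain ⟨k, rfl | rfl⟩ := Nat.even_or_odd' n
  · simpa using prod_range_two_mul_add_of_mul_reflect_eq_one
      (fun m => ((2 * m + 1)! : ZMod p)) k 0 fun j hj => hpair j (by omega)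
  · simpa using prod_range_two_mul_add_of_mul_reflect_eq_one
      (fun m => ((2 * m + 1)! : ZMod p)) k 1 fun j hj => hpair j (by omega)

theorem stmt_0_general (p n : ℕ) (hp : p.Prime) (hpn : p = 2 * n + 1) :
    (∏ j ∈ Finset.Icc 1 n, ∏ i ∈ Finset.Icc 1 (j - 1), ((j : ℤ) ^ 2 - (i : ℤ) ^ 2)) ≡
      (if p % 4 = 1 then -(n.factorial : ℤ) else 1) [ZMOD p] := by
  have := Fact.mk hp
  have hfac : (n ! : ZMod p) ≠ 0 := by
    rw [Ne, ZMod.natCast_eq_zero_iff, hp.dvd_factorial]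
    omega
  have key := congrArg (Int.cast : ℤ → ZMod p) (factorial_mul_prod_sq_sub_sq n)
  push_cast at key
  rw [ZMod.prod_range_factorial_two_mul_add_one hpn] at key
  have hmod : p % 4 = 1 ↔ Even n := by rw [Nat.even_iff]; omega
  rw [← ZMod.intCast_eq_intCast_iff, ← mul_right_inj' hfac]
  simp only [hmod]
  push_cast
  rw [key]
  split_ifs with heven
  · rw [mul_neg, ZMod.factorial_mul_factorial_eq_neg_one_pow (by omega),
      heven.add_one.neg_one_pow, neg_neg]
  · rw [mul_one]

theorem stmt_0 (p n : ℕ) (hp : p.Prime) (hpn : p = 2 * n + 1) (hn : 1 ≤ n) :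
    (∏ j ∈ Finset.Icc 1 n, ∏ i ∈ Finset.Icc 1 (j - 1), ((j : ℤ) ^ 2 - (i : ℤ) ^ 2)) ≡
      (if p % 4 = 1 then -(n.factorial : ℤ) else 1) [ZMOD p] :=
  stmt_0_general p n hp hpn
end

section
/- Let p = 2n+1 > 3 be a prime and ζ = e^(2πi/(p-1)). Then the square of the product over 1 ≤ i < j ≤ n of (ζ^(2j) - ζ^(2i)) equals n^n · (-1)^((n²+n+2)/2). -/
/-!
With `ω = ζ ^ 2`, a primitive `n`-th root of unity, the numbers `ω ^ j` (`1 ≤ j ≤ n`) are the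
roots of `f = X ^ n - 1`. Up to the sign `(-1) ^ (n (n - 1) / 2)`, the squared Vandermonde product
is `∏ i ∏ j ≠ i (ω ^ i - ω ^ j) = ∏ i f'(ω ^ i) = n ^ n ∏ i ω ^ (i (n - 1))`, and since
`ω ^ (i (n - 1)) = (ω ^ i)⁻¹` while the product of all roots of `f` is `(-1) ^ (n + 1)` (Vieta),
this equals `(-1) ^ (n + 1) n ^ n`.
-/

open Finset Polynomial

section Vandermonde

variable {R : Type*} [CommRing R]

theorem prod_range_prod_erase_sub (v : ℕ → R) (n : ℕ) :
    ∏ i ∈ range n, ∏ j ∈ (range n).erase i, (v i - v j) =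
      (-1) ^ (n * (n - 1) / 2) * (∏ j ∈ range n, ∏ i ∈ range j, (v j - v i)) ^ 2 := by
  have split : ∀ i ∈ range n, ∏ j ∈ (range n).erase i, (v i - v j) =
      (∏ j ∈ range i, (v i - v j)) * ∏ j ∈ Ioo i n, (v i - v j) := by
    intro i hi
    rw [← prod_filter_mul_prod_filter_not ((range n).erase i) (· < i)]
    congr 2 <;> ext j <;> simp only [mem_filter, mem_erase, mem_range, mem_Ioo] at hi ⊢ <;> omega
  have upper : ∏ i ∈ range n, ∏ j ∈ Ioo i n, (v i - v j) =
      ∏ j ∈ range n, ∏ i ∈ range j, -(v j - v i) := by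
    rw [prod_comm' (t' := range n) (s' := range)]
    · simp only [neg_sub]
    · intro i j; simp only [mem_range, mem_Ioo]; omega
  rw [prod_congr rfl split, prod_mul_distrib, upper]
  simp only [prod_neg, prod_mul_distrib, card_range]
  rw [prod_pow_eq_pow_sum, sum_range_id]
  ring

theorem IsPrimitiveRoot.prod_prod_erase_pow_sub_pow [IsDomain R] {ω : R} {n : ℕ}
    (hω : IsPrimitiveRoot ω n) (hn : 0 < n) :
    ∏ i ∈ range n, ∏ j ∈ (range n).erase i, (ω ^ (i + 1) - ω ^ (j + 1)) =
      (-1) ^ (n + 1) * n ^ n := by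
  set v : ℕ → R := fun i ↦ ω ^ (i + 1)
  have hnodal : Lagrange.nodal (range n) v = X ^ n - C 1 := by
    simp only [X_pow_sub_C_eq_prod hω hn hω.pow_eq_one, Lagrange.nodal, v, pow_succ]
  have hderiv : ∀ i ∈ range n, ∏ j ∈ (range n).erase i, (v i - v j) = n * v i ^ (n - 1) := by
    intro i hi
    rw [← Lagrange.eval_nodal, ← Lagrange.eval_nodal_derivative_eval_node_eq hi, hnodal,
      derivative_sub, derivative_X_pow, derivative_C]
    simp
  have hprod_roots : (-1) ^ n * ∏ i ∈ range n, v i = -1 := by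
    simpa [Lagrange.eval_nodal, prod_neg, zero_pow hn.ne'] using congrArg (eval 0) hnodal
  have hprod_pow : (∏ i ∈ range n, v i ^ (n - 1)) * ∏ i ∈ range n, v i = 1 := by
    rw [← prod_mul_distrib]
    refine prod_eq_one fun i _ ↦ ?_
    rw [← pow_succ, Nat.sub_add_cancel hn, pow_right_comm, hω.pow_eq_one, one_pow]
  rw [prod_congr rfl hderiv, prod_mul_distrib, prod_const, card_range]
  linear_combination (n : R) ^ n *
    ((∏ i ∈ range n, v i ^ (n - 1)) * hprod_roots - (-1) ^ n * hprod_pow)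

theorem IsPrimitiveRoot.sq_prod_pow_sub_pow [IsDomain R] {ω : R} {n : ℕ}
    (hω : IsPrimitiveRoot ω n) (hn : 0 < n) :
    (∏ j ∈ range n, ∏ i ∈ range j, (ω ^ (j + 1) - ω ^ (i + 1))) ^ 2 =
      (-1) ^ (n * (n - 1) / 2 + n + 1) * n ^ n := by
  have h := prod_range_prod_erase_sub (fun i ↦ ω ^ (i + 1)) n
  rw [hω.prod_prod_erase_pow_sub_pow hn] at h
  rw [add_assoc, pow_add, mul_assoc, h, ← mul_assoc, ← pow_add, ← two_mul, pow_mul, neg_one_sq,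
    one_pow, one_mul]

end Vandermonde

theorem Finset.prod_Icc_one_eq_prod_range_s10 {M : Type*} [CommMonoid M] (f : ℕ → M) (n : ℕ) :
    ∏ j ∈ Icc 1 n, f j = ∏ j ∈ range n, f (j + 1) := by
  rw [← Ico_add_one_right_eq_Icc, prod_Ico_eq_prod_range, Nat.add_sub_cancel]
  simp only [add_comm]

open Complex in
theorem stmt_10_general (p n : ℕ) (hp3 : 3 < p) (hpn : p = 2 * n + 1) :
    (∏ j ∈ Finset.Icc 1 n, ∏ i ∈ Finset.Icc 1 (j - 1),
        (Complex.exp (2 * Real.pi * I / (p - 1)) ^ (2 * j) -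
          Complex.exp (2 * Real.pi * I / (p - 1)) ^ (2 * i))) ^ 2 =
      (n : ℂ) ^ n * (-1) ^ ((n ^ 2 + n + 2) / 2) := by
  have hn : 0 < n := by omega
  have hζ : Complex.exp (2 * Real.pi * I / (p - 1)) ^ 2 = Complex.exp (2 * Real.pi * I / n) := by
    rw [← Complex.exp_nat_mul, hpn]
    congr 1
    push_cast
    field_simp
    ring
  have hexp : n * (n - 1) / 2 + n + 1 = (n ^ 2 + n + 2) / 2 := by
    have h : n ^ 2 + n + 2 = n * (n - 1) + 2 * (n + 1) := by
      cases n with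
      | zero => rfl
      | succ m => simp only [Nat.add_sub_cancel]; ring
    rw [h, Nat.add_mul_div_left _ _ two_pos, add_assoc]
  simp only [pow_mul, hζ, prod_Icc_one_eq_prod_range_s10, Nat.add_sub_cancel]
  rw [(Complex.isPrimitiveRoot_exp n hn.ne').sq_prod_pow_sub_pow hn, hexp, mul_comm]

open Complex in
theorem stmt_10 (p n : ℕ) (hp : p.Prime) (hp3 : 3 < p) (hpn : p = 2 * n + 1) :
    (∏ j ∈ Finset.Icc 1 n, ∏ i ∈ Finset.Icc 1 (j - 1),
        (Complex.exp (2 * Real.pi * I / (p - 1)) ^ (2 * j) -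
          Complex.exp (2 * Real.pi * I / (p - 1)) ^ (2 * i))) ^ 2 =
      (n : ℂ) ^ n * (-1) ^ ((n ^ 2 + n + 2) / 2) :=
  stmt_10_general p n hp3 hpn
end

section
/- Let p = 2n+1 > 3 be a prime and ζ = e^(2πi/(p-1)). Then the product over 1 ≤ i < j ≤ n of (ζ^(2j) - ζ^(2i)) equals n^(n/2) · e^((3n² - n - 2)πi/4). -/
/-!
Put `ω = ζ ^ 2 = exp (2πi / n)`. Each factor is
`ω ^ j - ω ^ i = 2 sin (π (j - i) / n) · exp (i (π (i + j) / n + π / 2))`.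
The moduli depend only on `k = j - i` and multiply to `∏ₖ (2 sin (π k / n)) ^ (n - k)`; the
reflection `k ↦ n - k` shows that its square is `(∏ₖ 2 sin (π k / n)) ^ n = |∏ₖ (1 - ω ^ k)| ^ n
= n ^ n`. The phases add up to `π (3 n² - n - 2) / 4`.
-/

open Finset Complex
open scoped Real

theorem Complex.exp_mul_I_sub_exp_mul_I (x y : ℝ) :
    cexp (x * I) - cexp (y * I) =
      (2 * Real.sin ((x - y) / 2) : ℝ) * cexp (((x + y) / 2 + π / 2 : ℝ) * I) := by
  have hx : (x : ℂ) * I = ((x + y) / 2 : ℝ) * I + ((x - y) / 2 : ℝ) * I := by push_cast; ring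
  have hy : (y : ℂ) * I = ((x + y) / 2 : ℝ) * I + -((x - y) / 2 : ℝ) * I := by push_cast; ring
  have hpi : ((π / 2 : ℝ) : ℂ) = π / 2 := by push_cast; ring
  rw [hx, hy, ofReal_add, add_mul, exp_add, exp_add, exp_add, hpi, exp_pi_div_two_mul_I,
    ofReal_mul, ofReal_ofNat, ofReal_sin, two_sin]
  ring_nf
  rw [I_sq]
  ring

theorem Real.sin_pi_mul_div_pos {k n : ℕ} (hk : k ≠ 0) (hkn : k < n) :
    0 < Real.sin (π * k / n) := by
  have hn : (0 : ℝ) < n := by exact_mod_cast (by omega : 0 < n)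
  have hkn' : (k : ℝ) < n := by exact_mod_cast hkn
  apply Real.sin_pos_of_pos_of_lt_pi
  · have : (0 : ℝ) < k := by exact_mod_cast Nat.pos_of_ne_zero hk
    positivity
  · rw [div_lt_iff₀ hn]
    nlinarith [Real.pi_pos]

theorem prod_two_sin_pi_mul_div {n : ℕ} (hn : n ≠ 0) :
    ∏ k ∈ Icc 1 (n - 1), 2 * Real.sin (π * k / n) = n := by
  obtain ⟨m, rfl⟩ : ∃ m, n = m + 1 := ⟨n - 1, by omega⟩
  have hfactor : ∀ k ∈ range m,
      ‖1 - cexp (2 * π * I / (m + 1 : ℕ)) ^ (k + 1)‖ =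
        2 * Real.sin (π * (k + 1 : ℕ) / (m + 1 : ℕ)) := by
    intro k hk
    have hpow : cexp (2 * π * I / (m + 1 : ℕ)) ^ (k + 1) =
        cexp (I * (2 * π * (k + 1 : ℕ) / (m + 1 : ℕ) : ℝ)) := by
      rw [← exp_nat_mul]; push_cast; ring_nf
    have hhalf : 2 * π * (k + 1 : ℕ) / (m + 1 : ℕ) / 2 = π * (k + 1 : ℕ) / (m + 1 : ℕ) := by
      ring
    rw [hpow, norm_sub_rev, norm_exp_I_mul_ofReal_sub_one, hhalf, Real.norm_of_nonneg]
    exact mul_nonneg zero_le_two (Real.sin_pi_mul_div_pos (by omega) (by simpa using hk)).le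
  have hroot := congrArg norm (isPrimitiveRoot_exp (m + 1) hn).prod_one_sub_pow_eq_order
  rw [norm_prod, prod_congr rfl hfactor] at hroot
  have hshift := prod_Ico_add' (fun k : ℕ ↦ 2 * Real.sin (π * k / (m + 1 : ℕ))) 0 m 1
  rw [zero_add, Ico_add_one_right_eq_Icc, ← range_eq_Ico] at hshift
  rw [Nat.add_sub_cancel, ← hshift, hroot]
  norm_cast

theorem Finset.prod_Icc_prod_Icc_tsub {M : Type*} [CommMonoid M] (f : ℕ → M) (n : ℕ) :
    ∏ j ∈ Icc 1 n, ∏ i ∈ Icc 1 (j - 1), f (j - i) = ∏ k ∈ Icc 1 (n - 1), f k ^ (n - k) := by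
  have hreflect : ∀ j ∈ Icc 1 n,
      ∏ i ∈ Icc 1 (j - 1), f (j - i) = ∏ k ∈ Icc 1 (j - 1), f k := by
    intro j hj
    apply prod_nbij' (j - ·) (j - ·) <;> intro a ha <;> simp only [mem_Icc] at * <;> omega
  rw [prod_congr rfl hreflect, prod_comm' (t' := Icc 1 (n - 1)) (s' := fun k ↦ Icc (k + 1) n)
    (by intro j k; simp only [mem_Icc]; omega)]
  refine prod_congr rfl fun k _ ↦ ?_
  rw [prod_const, Nat.card_Icc, Nat.add_sub_add_right]

theorem prod_two_sin_pi_mul_div_pow {n : ℕ} (hn : n ≠ 0) :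
    ∏ k ∈ Icc 1 (n - 1), (2 * Real.sin (π * k / n)) ^ (n - k) = (n : ℝ) ^ ((n : ℝ) / 2) := by
  set F : ℕ → ℝ := fun k ↦ 2 * Real.sin (π * k / n)
  set P := ∏ k ∈ Icc 1 (n - 1), F k ^ (n - k)
  have hPpos : 0 < P := prod_pos fun k hk ↦ by
    rw [mem_Icc] at hk
    exact pow_pos (mul_pos two_pos (Real.sin_pi_mul_div_pos (by omega) (by omega))) _
  have hreflect : P = ∏ k ∈ Icc 1 (n - 1), F k ^ k := by
    apply prod_nbij' (n - ·) (n - ·) <;> intro k hk <;> simp only [mem_Icc] at * <;> try omega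
    have hsymm : π * ((n - k : ℕ) : ℝ) / n = π - π * k / n := by
      rw [Nat.cast_sub (by omega)]; field_simp
    simp only [F, hsymm, Real.sin_pi_sub]
  have hsq : P ^ 2 = (n : ℝ) ^ n := by
    rw [sq]
    nth_rewrite 2 [hreflect]
    rw [← prod_mul_distrib, prod_congr rfl fun k hk ↦ by
      rw [← pow_add, Nat.sub_add_cancel (by simp at hk; omega)], prod_pow,
      prod_two_sin_pi_mul_div hn]
  rw [show (n : ℝ) / 2 = n * (1 / 2) by ring, Real.rpow_mul (Nat.cast_nonneg n), Real.rpow_natCast,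
    ← hsq, ← Real.sqrt_eq_rpow, Real.sqrt_sq hPpos.le]

theorem sum_Icc_one_natCast (m : ℕ) : ∑ i ∈ Icc 1 m, (i : ℝ) = m * (m + 1) / 2 := by
  induction m with
  | zero => simp
  | succ m ih => rw [sum_Icc_succ_top (by omega), ih]; push_cast; ring

theorem sum_Icc_sum_Icc_affine (a b : ℝ) (m : ℕ) :
    ∑ j ∈ Icc 1 m, ∑ i ∈ Icc 1 (j - 1), (a * (i + j) + b) =
      a * (m ^ 3 - m) / 2 + b * m * (m - 1) / 2 := by
  induction m with
  | zero => simp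
  | succ m ih =>
    rw [sum_Icc_succ_top (by omega), ih, Nat.add_sub_cancel, sum_add_distrib, ← mul_sum,
      sum_add_distrib, sum_Icc_one_natCast, sum_const, sum_const, Nat.card_Icc,
      Nat.add_sub_cancel, nsmul_eq_mul, nsmul_eq_mul]
    push_cast
    ring

theorem prod_exp_two_pi_I_div_pow_sub_pow {n : ℕ} (hn : n ≠ 0) :
    ∏ j ∈ Icc 1 n, ∏ i ∈ Icc 1 (j - 1),
        (cexp (2 * π * I / n) ^ j - cexp (2 * π * I / n) ^ i) =
      ((n : ℝ) ^ ((n : ℝ) / 2) : ℝ) * cexp ((3 * (n : ℂ) ^ 2 - n - 2) * π * I / 4) := by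
  have hpow (m : ℕ) : cexp (2 * π * I / n) ^ m = cexp ((2 * π * m / n : ℝ) * I) := by
    rw [← exp_nat_mul]; push_cast; ring_nf
  have hfactor : ∀ j ∈ Icc 1 n, ∀ i ∈ Icc 1 (j - 1),
      cexp (2 * π * I / n) ^ j - cexp (2 * π * I / n) ^ i =
        (2 * Real.sin (π * (j - i : ℕ) / n) : ℝ) * cexp (((π / n) * (i + j) + π / 2 : ℝ) * I) := by
    intro j _ i hi
    rw [hpow, hpow, exp_mul_I_sub_exp_mul_I, Nat.cast_sub (by simp at hi; omega)]
    congr 4 <;> ring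
  rw [prod_congr rfl fun j hj ↦ prod_congr rfl (hfactor j hj)]
  rw [prod_congr rfl fun j _ ↦ prod_mul_distrib, prod_mul_distrib]
  simp only [← ofReal_prod, ← exp_sum, ← sum_mul, ← ofReal_sum]
  rw [prod_Icc_prod_Icc_tsub (fun k ↦ 2 * Real.sin (π * k / n)), prod_two_sin_pi_mul_div_pow hn,
    sum_Icc_sum_Icc_affine]
  congr 2
  push_cast
  field_simp
  ring

open Complex in
theorem stmt_11_general (p n : ℕ) (hp3 : 3 < p) (hpn : p = 2 * n + 1) :
    (∏ j ∈ Finset.Icc 1 n, ∏ i ∈ Finset.Icc 1 (j - 1),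
        (Complex.exp (2 * Real.pi * I / (p - 1)) ^ (2 * j) -
          Complex.exp (2 * Real.pi * I / (p - 1)) ^ (2 * i))) =
      (((n : ℝ) ^ ((n : ℝ) / 2) : ℝ) : ℂ) *
        Complex.exp ((3 * (n : ℂ) ^ 2 - n - 2) * Real.pi * I / 4) := by
  have hζ (m : ℕ) : cexp (2 * π * I / (p - 1)) ^ (2 * m) = cexp (2 * π * I / n) ^ m := by
    rw [pow_mul, ← exp_nat_mul, hpn]
    push_cast
    ring_nf
  simp only [hζ]
  exact prod_exp_two_pi_I_div_pow_sub_pow (by omega)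

open Complex in
theorem stmt_11 (p n : ℕ) (hp : p.Prime) (hp3 : 3 < p) (hpn : p = 2 * n + 1) :
    (∏ j ∈ Finset.Icc 1 n, ∏ i ∈ Finset.Icc 1 (j - 1),
        (Complex.exp (2 * Real.pi * I / (p - 1)) ^ (2 * j) -
          Complex.exp (2 * Real.pi * I / (p - 1)) ^ (2 * i))) =
      (((n : ℝ) ^ ((n : ℝ) / 2) : ℝ) : ℂ) *
        Complex.exp ((3 * (n : ℂ) ^ 2 - n - 2) * Real.pi * I / 4) :=
  stmt_11_general p n hp3 hpn
end

section
/- Let p ≡ 1 (mod 4) be a prime, n = (p-1)/2, and let g be a primitive root modulo p. Then the product over 1 ≤ i < j ≤ n of (g^(2j) - g^(2i)) is congruent modulo p to n^(n/2) · g^((p-1)(3n² - n - 2)/8). -/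
/-!
Write `n = 2m`. Since `g` has order `2n`, `g ^ n = -1`, and with `h d = g ^ d + g ^ (n - d)`
(that is, `g ^ d - g ^ (-d)`) each factor splits as `g ^ (2j) - g ^ (2i) = g ^ (i + j) * h (j - i)`.
The difference `d = j - i` occurs `n - d` times, and since `h (n - d) = h d`, pairing `d` with
`n - d` gives `∏ h d ^ (n - d) = (∏ h d) ^ m`. Finally `g ^ d * h d = (g ^ 2) ^ d - 1`, and
`∏_{0<d<n} (ζ ^ d - 1) = -n` for the primitive `n`-th root of unity `ζ = g ^ 2`. So the product
is `n ^ m` times a power of `g`, and the exponents agree modulo `2n = p - 1`.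
-/

open Finset

theorem two_mul_sum_Icc_id (n : ℕ) : 2 * ∑ i ∈ Icc 1 n, i = n * (n + 1) := by
  induction n with
  | zero => simp
  | succ n ih => rw [sum_Icc_succ_top (by omega), mul_add, ih]; ring

theorem two_mul_sum_Icc_sum_Icc_add (n : ℕ) :
    2 * ∑ j ∈ Icc 1 n, ∑ i ∈ Icc 1 (j - 1), (i + j) = (n - 1) * n * (n + 1) := by
  induction n with
  | zero => simp
  | succ n ih =>
    rw [sum_Icc_succ_top (by omega), Nat.add_sub_cancel, sum_add_distrib, mul_add, mul_add, ih,
      two_mul_sum_Icc_id, sum_const, Nat.card_Icc, smul_eq_mul]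
    rcases n with _ | n
    · simp
    · simp only [Nat.add_sub_cancel]; ring

section CommMonoid

variable {M : Type*} [CommMonoid M]

theorem prod_Icc_prod_Icc_sub_eq_prod_Ico_pow (f : ℕ → M) (n : ℕ) :
    ∏ j ∈ Icc 1 n, ∏ i ∈ Icc 1 (j - 1), f (j - i) = ∏ d ∈ Ico 1 n, f d ^ (n - d) := by
  have reflect (j : ℕ) (hj : j ∈ Icc 1 n) :
      ∏ i ∈ Icc 1 (j - 1), f (j - i) = ∏ d ∈ Ico 1 j, f d := by
    rw [← Ico_add_one_right_eq_Icc, Nat.sub_add_cancel (mem_Icc.1 hj).1,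
      prod_Ico_reflect f 1 (Nat.le_succ j), Nat.add_sub_cancel_left, Nat.add_sub_cancel]
  rw [prod_congr rfl reflect, prod_comm' (t' := Ico 1 n) (s' := fun d => Ioc d n)
    fun j d => by simp only [mem_Icc, mem_Ico, mem_Ioc]; omega]
  exact prod_congr rfl fun d _ => by rw [prod_const, Nat.card_Ioc]

theorem prod_Ico_one_two_mul (f : ℕ → M) {m : ℕ} (hm : 0 < m) :
    ∏ d ∈ Ico 1 (2 * m), f d = (∏ d ∈ Ico 1 m, f d * f (2 * m - d)) * f m := by
  rw [← prod_Ico_consecutive f (by omega : 1 ≤ m) (by omega : m ≤ 2 * m),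
    prod_eq_prod_Ico_succ_bot (by omega : m < 2 * m), prod_mul_distrib,
    prod_Ico_reflect f 1 (by omega : m ≤ 2 * m + 1), show 2 * m + 1 - m = m + 1 by omega,
    Nat.add_sub_cancel]
  ac_rfl

theorem prod_Ico_pow_two_mul_sub_eq_pow_prod {f : ℕ → M} {m : ℕ}
    (hf : ∀ d ≤ 2 * m, f (2 * m - d) = f d) :
    ∏ d ∈ Ico 1 (2 * m), f d ^ (2 * m - d) = (∏ d ∈ Ico 1 (2 * m), f d) ^ m := by
  rcases m.eq_zero_or_pos with rfl | hm
  · simp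
  rw [prod_Ico_one_two_mul _ hm, prod_Ico_one_two_mul _ hm, mul_pow, ← prod_pow,
    show 2 * m - m = m by omega]
  congr 1
  refine prod_congr rfl fun d hd => ?_
  have hd : d < m := (mem_Ico.1 hd).2
  rw [hf d (by omega), Nat.sub_sub_self (by omega), ← pow_add, ← sq, ← pow_mul]
  congr 1
  omega

end CommMonoid

theorem pow_two_mul_sub_pow_two_mul {R : Type*} [CommRing R] {g : R} {n : ℕ} (hg : g ^ n = -1)
    {i j : ℕ} (hij : i ≤ j) (hjn : j ≤ i + n) :
    g ^ (2 * j) - g ^ (2 * i) = g ^ (i + j) * (g ^ (j - i) + g ^ (n - (j - i))) := by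
  rw [mul_add, ← pow_add, ← pow_add, show i + j + (j - i) = 2 * j by omega,
    show i + j + (n - (j - i)) = n + 2 * i by omega, pow_add, hg]
  ring

theorem prod_pow_two_mul_sub_pow_two_mul_of_pow_eq_neg_one {R : Type*} [CommRing R] {g : R}
    {m : ℕ} (hg : g ^ (2 * m) = -1) :
    ∏ j ∈ Icc 1 (2 * m), ∏ i ∈ Icc 1 (j - 1), (g ^ (2 * j) - g ^ (2 * i)) =
      g ^ (∑ j ∈ Icc 1 (2 * m), ∑ i ∈ Icc 1 (j - 1), (i + j)) *
        (∏ d ∈ Ico 1 (2 * m), (g ^ d + g ^ (2 * m - d))) ^ m := by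
  calc _ = ∏ j ∈ Icc 1 (2 * m), ∏ i ∈ Icc 1 (j - 1),
        g ^ (i + j) * (g ^ (j - i) + g ^ (2 * m - (j - i))) := by
        refine prod_congr rfl fun j hj => prod_congr rfl fun i hi => ?_
        rw [mem_Icc] at hi hj
        exact pow_two_mul_sub_pow_two_mul hg (by omega) (by omega)
    _ = _ := by
        simp only [prod_mul_distrib, prod_pow_eq_pow_sum,
          prod_Icc_prod_Icc_sub_eq_prod_Ico_pow fun d => g ^ d + g ^ (2 * m - d)]
        rw [prod_Ico_pow_two_mul_sub_eq_pow_prod fun d hd => by rw [Nat.sub_sub_self hd, add_comm]]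

namespace IsPrimitiveRoot

variable {R : Type*} [CommRing R] [IsDomain R] {g : R} {m n : ℕ}

theorem pow_eq_neg_one (hg : IsPrimitiveRoot g (2 * n)) (hn : 0 < n) : g ^ n = -1 :=
  (hg.pow (by omega) (mul_comm 2 n)).eq_neg_one_of_two_right

theorem prod_Ico_pow_sub_one (hg : IsPrimitiveRoot g n) (hn : 0 < n) :
    ∏ d ∈ Ico 1 n, (g ^ d - 1) = (-1) ^ (n - 1) * n := by
  have hg' : IsPrimitiveRoot g (n - 1 + 1) := by rwa [Nat.sub_add_cancel hn]
  have h := hg'.prod_pow_sub_one_eq_order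
  rw [Nat.cast_pred hn, sub_add_cancel] at h
  rw [prod_Ico_eq_prod_range]
  simp only [add_comm 1]
  rw [← h, ← mul_assoc, ← pow_add, ← two_mul, pow_mul, neg_one_sq, one_pow, one_mul]

theorem prod_Ico_pow_mul_pow_add_pow_sub (hg : IsPrimitiveRoot g (2 * n)) (hn : 0 < n) :
    ∏ d ∈ Ico 1 n, g ^ d * (g ^ d + g ^ (n - d)) = (-1) ^ (n - 1) * n := by
  rw [← (hg.pow (by omega) rfl).prod_Ico_pow_sub_one hn]
  refine prod_congr rfl fun d hd => ?_
  rw [mul_add, ← pow_add, ← pow_add, Nat.add_sub_cancel' (mem_Ico.1 hd).2.le,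
    hg.pow_eq_neg_one hn, ← pow_mul, two_mul, sub_eq_add_neg]

theorem prod_pow_two_mul_sub_pow_two_mul (hg : IsPrimitiveRoot g (2 * (2 * m))) :
    ∏ j ∈ Icc 1 (2 * m), ∏ i ∈ Icc 1 (j - 1), (g ^ (2 * j) - g ^ (2 * i)) =
      (2 * m : R) ^ m * g ^ (m * (2 * m - 1) * (3 * m + 1)) := by
  rcases m.eq_zero_or_pos with rfl | hm
  · simp
  have hneg : g ^ (2 * m) = -1 := hg.pow_eq_neg_one (by omega)
  rw [prod_pow_two_mul_sub_pow_two_mul_of_pow_eq_neg_one hneg]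
  set h : ℕ → R := fun d => g ^ d + g ^ (2 * m - d)
  set T := ∑ j ∈ Icc 1 (2 * m), ∑ i ∈ Icc 1 (j - 1), (i + j)
  set S := ∑ d ∈ Ico 1 (2 * m), d
  have hH : g ^ S * ∏ d ∈ Ico 1 (2 * m), h d = 2 * m * g ^ (2 * m) := by
    rw [← prod_pow_eq_pow_sum, ← prod_mul_distrib,
      hg.prod_Ico_pow_mul_pow_add_pow_sub (by omega), hneg, Odd.neg_one_pow ⟨m - 1, by omega⟩]
    push_cast
    ring
  have hexp : m * (2 * m - 1) * (3 * m + 1) + m * S =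
      T + 2 * m * m + 2 * (2 * m) * (m * (m - 1)) := by
    have hT : 2 * T = (2 * m - 1) * (2 * m) * (2 * m + 1) := two_mul_sum_Icc_sum_Icc_add _
    have hS : S * 2 = 2 * m * (2 * m - 1) := by
      rw [← sum_range_id_mul_two, range_eq_Ico, sum_eq_sum_Ico_succ_bot (by omega), zero_add]
    obtain ⟨k, rfl⟩ : ∃ k, m = k + 1 := ⟨m - 1, by omega⟩
    rw [show 2 * (k + 1) - 1 = 2 * k + 1 by omega, Nat.add_sub_cancel] at *
    nlinarith
  refine mul_right_cancel₀ (pow_ne_zero (m * S) (hg.ne_zero (by omega))) ?_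
  calc _ = g ^ T * (g ^ S * ∏ d ∈ Ico 1 (2 * m), h d) ^ m := by rw [pow_mul']; ring
    _ = (2 * m : R) ^ m * g ^ (T + 2 * m * m) := by
      rw [hH, mul_pow, ← pow_mul, mul_left_comm, ← pow_add]
    _ = _ := by
      rw [mul_assoc ((2 * m : R) ^ m), ← pow_add, hexp, pow_add _ _ (2 * (2 * m) * _), pow_mul,
        hg.pow_eq_one, one_pow, mul_one]

end IsPrimitiveRoot

theorem stmt_14 (p n : ℕ) (hp : p.Prime) (hp4 : p % 4 = 1) (hpn : p = 2 * n + 1)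
    (g : ℤ) (hg : IsPrimitiveRoot (g : ZMod p) (p - 1)) :
    (∏ j ∈ Finset.Icc 1 n, ∏ i ∈ Finset.Icc 1 (j - 1), (g ^ (2 * j) - g ^ (2 * i))) ≡
      (n : ℤ) ^ (n / 2) * g ^ ((p - 1) * (3 * n ^ 2 - n - 2) / 8) [ZMOD p] := by
  have : Fact p.Prime := ⟨hp⟩
  obtain ⟨m, rfl⟩ : ∃ m, n = 2 * m := ⟨n / 2, by omega⟩
  rw [show p - 1 = 2 * (2 * m) by omega] at hg ⊢
  have hexp : 2 * (2 * m) * (3 * (2 * m) ^ 2 - 2 * m - 2) / 8 = m * (2 * m - 1) * (3 * m + 1) := by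
    refine Nat.div_eq_of_eq_mul_left (by norm_num) ?_
    rcases m with _ | k
    · simp
    · rw [show 2 * (k + 1) - 1 = 2 * k + 1 by omega,
        show 3 * (2 * (k + 1)) ^ 2 - 2 * (k + 1) - 2 = 2 * ((2 * k + 1) * (3 * (k + 1) + 1)) by
          ring_nf; omega]
      ring
  rw [← ZMod.intCast_eq_intCast_iff]
  push_cast
  rw [hg.prod_pow_two_mul_sub_pow_two_mul, hexp, Nat.mul_div_cancel_left m two_pos]
end

section
/- Let p ≡ 1 (mod 4) be a prime, n = (p-1)/2, and let 1 = a_1 < a_2 < ... < a_n ≤ p-1 be the quadratic residues mod p in increasing order. Then the product over 1 ≤ i < j ≤ n of (a_j - a_i) is congruent modulo p to (-1)^(r_p*) · (n!)^((p-5)/4) · s_p, where s_p is the product of all quadratic nonresidues k with 1 ≤ k ≤ n and r_p* = #{(x,y) : 1 ≤ x,y ≤ n, x+y ≤ n, (x/p) = (y/p) = 1}. -/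
/-!
Work in `𝔽_p`, with `R` the nonzero squares and `Q = R ∩ [1, n]`. Each difference `v - u` of
elements of `R` is `±|v - u|`, where `|·|` is the absolute least residue; for `u < v` the sign is
`-` exactly when `u ≤ n < v` and `u + (p - v) ≤ n`, so the signs contribute `(-1) ^ r_p*`.
As `-1` is a square, `R = Q ∪ -Q`, and `(u, v) ↦ ±(u, -v)`, the sign putting the first entry in
`Q`, maps the pairs `u < v` bijectively onto the pairs `(x, s) ∈ Q × R` with `x + s ≠ 0`, with
`|v - u| = |x + s|`. Grouping by `c = |x + s| ∈ [1, n]`, the exponent of `c` is the number of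
ways to write `c` as a sum of two elements of `R`, which a Jacobi sum evaluates to
`(p - 5) / 4 + [c is a nonresidue]`; hence the product of the `|v - u|` is
`n! ^ ((p - 5) / 4) * s_p`.
-/

open Finset

theorem prod_eq_prod_pow_card_filter_eq {ι M : Type*} [CommMonoid M] [DecidableEq M]
    {s : Finset ι} {t : Finset M} {g : ι → M} (h : ∀ i ∈ s, g i ∈ t) :
    ∏ i ∈ s, g i = ∏ c ∈ t, c ^ #{i ∈ s | g i = c} := by
  rw [← prod_fiberwise_of_maps_to h]
  exact prod_congr rfl fun c _ => prod_eq_pow_card fun i hi => (mem_filter.1 hi).2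

theorem prod_prod_filter_lt_eq_prod_filter_key_lt {ι β α M : Type*} [Fintype ι] [LinearOrder ι]
    [DecidableEq β] [LinearOrder α] [CommMonoid M] (b : ι → β) (key : β → α)
    (hb : StrictMono (key ∘ b)) (f : β → β → M) :
    ∏ j, ∏ i with i < j, f (b i) (b j) =
      ∏ q ∈ univ.image b ×ˢ univ.image b with key q.1 < key q.2, f q.1 q.2 := by
  rw [← prod_finset_product_right' (univ.filter fun q : ι × ι => q.1 < q.2) _ _
    (fun q => by simp)]
  refine prod_nbij (Prod.map b b) ?_ ?_ ?_ fun _ _ => rfl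
  · intro q hq
    simp only [mem_filter, mem_univ, true_and] at hq
    simpa using hb hq
  · intro q _ q' _ h
    simp only [Prod.map, Prod.mk.injEq] at h
    exact Prod.ext (hb.injective.of_comp h.1) (hb.injective.of_comp h.2)
  · rintro ⟨u, v⟩ huv
    simp only [coe_filter, mem_product, mem_image, mem_univ, true_and, Set.mem_ofPred_eq] at huv
    obtain ⟨⟨⟨i, rfl⟩, ⟨j, rfl⟩⟩, hlt⟩ := huv
    exact ⟨(i, j), by simpa using hb.lt_iff_lt.1 hlt, rfl⟩

theorem prod_eq_neg_one_pow_mul_prod_natAbs_valMinAbs {ι : Type*} {n : ℕ} [NeZero n]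
    (s : Finset ι) (f : ι → ZMod n) :
    ∏ i ∈ s, f i =
      (-1) ^ #{i ∈ s | n / 2 < (f i).val} *
        ((∏ i ∈ s, (f i).valMinAbs.natAbs : ℕ) : ZMod n) := by
  have hsign : ∀ i ∈ s, f i =
      (if n / 2 < (f i).val then -1 else 1) * ((f i).valMinAbs.natAbs : ZMod n) := by
    intro i _
    rw [ZMod.natCast_natAbs_valMinAbs]
    by_cases h : n / 2 < (f i).val
    · rw [if_pos h, if_neg h.not_ge, neg_one_mul, neg_neg]
    · rw [if_neg h, if_pos (not_lt.1 h), one_mul]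
  rw [prod_congr rfl hsign, prod_mul_distrib, prod_ite, prod_const, prod_const_one, mul_one,
    Nat.cast_prod]

theorem natAbs_valMinAbs_eq_iff {n c : ℕ} (hc : c ≤ n / 2) (z : ZMod n) :
    z.valMinAbs.natAbs = c ↔ z = c ∨ z = -c := by
  rw [← ZMod.natAbs_valMinAbs_eq_natAbs_valMinAbs, ZMod.valMinAbs_natCast_of_le_half hc,
    Int.natAbs_natCast]

theorem natCast_ne_neg_natCast {n c : ℕ} (hn : n % 2 = 1) (hc0 : 0 < c) (hc : c ≤ n / 2) :
    (c : ZMod n) ≠ -c := by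
  intro h
  rcases (ZMod.neg_eq_self_iff (c : ZMod n)).1 h.symm with h0 | h2
  · rw [ZMod.natCast_eq_zero_iff] at h0
    exact absurd (Nat.le_of_dvd hc0 h0) (by omega)
  · rw [ZMod.val_natCast_of_lt (by omega)] at h2
    omega

theorem prod_Icc_pow_add_ite_eq (N k : ℕ) (P : ℕ → Prop) [DecidablePred P] :
    ∏ c ∈ Icc 1 N, c ^ (k + if P c then 1 else 0) =
      N.factorial ^ k * ∏ c ∈ Icc 1 N with P c, c := by
  simp_rw [pow_add, prod_mul_distrib, prod_pow, pow_ite, pow_one, pow_zero, prod_ite,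
    prod_const_one, mul_one]
  rw [← Ico_add_one_right_eq_Icc, prod_Ico_id_eq_factorial]

section FiniteField

variable {F : Type*} [Field F] [Fintype F] [DecidableEq F]

theorem sum_quadraticChar_mul_quadraticChar_sub (hF : ringChar F ≠ 2) {c : F} (hc : c ≠ 0) :
    ∑ x, quadraticChar F x * quadraticChar F (c - x) = -quadraticChar F (-1) := by
  have hJ := jacobiSum_nontrivial_inv (quadraticChar_ne_one hF)
  rw [(quadraticChar_isQuadratic F).inv, jacobiSum] at hJ
  rw [← hJ]
  refine (Fintype.sum_bijective (c * ·) (mulLeft_bijective₀ c hc) _ _ fun y => ?_).symm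
  rw [← mul_one_sub, map_mul, map_mul]
  linear_combination -(quadraticChar F y * quadraticChar F (1 - y)) * quadraticChar_sq_one hc

theorem card_quadraticChar_eq_one_and_sub (hF : ringChar F ≠ 2) {c : F} (hc : c ≠ 0) :
    4 * (#{x | quadraticChar F x = 1 ∧ quadraticChar F (c - x) = 1} : ℤ) =
      Fintype.card F - 2 - quadraticChar F (-1) - 2 * quadraticChar F c := by
  set χ := quadraticChar F
  have hpt : ∀ x, (1 + χ x) * (1 + χ (c - x)) =
      4 * (if χ x = 1 ∧ χ (c - x) = 1 then 1 else 0) + (if x = 0 then 1 + χ c else 0) +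
        (if x = c then 1 + χ c else 0) := by
    intro x
    by_cases h0 : x = 0
    · simp [h0, Ne.symm hc, χ]
    by_cases hcx : x = c
    · simp [hcx, hc, χ]
    have hcx' : c - x ≠ 0 := sub_ne_zero.2 (Ne.symm hcx)
    rcases quadraticChar_dichotomy h0 with h1 | h1 <;>
      rcases quadraticChar_dichotomy hcx' with h2 | h2 <;>
      simp [χ, h0, hcx, h1, h2]
  have hsum := congrArg (fun f : F → ℤ => ∑ x, f x) (funext hpt)
  simp only [sum_add_distrib, ← mul_sum, sum_ite_eq', mem_univ, if_true, sum_boole] at hsum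
  have hsub : ∑ x, χ (c - x) = 0 := by
    rw [← quadraticChar_sum_zero hF]
    exact Fintype.sum_bijective (c - ·) (sub_right_injective.bijective_of_finite) _ _ fun _ => rfl
  have hmul := sum_quadraticChar_mul_quadraticChar_sub hF hc
  have hexp : ∀ x, (1 + χ x) * (1 + χ (c - x)) = 1 + χ x + χ (c - x) + χ x * χ (c - x) :=
    fun x => by ring
  simp only [hexp, sum_add_distrib, sum_const, card_univ, hsub] at hsum
  linear_combination -hsum + quadraticChar_sum_zero hF + hmul

end FiniteField

section Squares

variable (p : ℕ) [Fact p.Prime]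

def squares : Finset (ZMod p) := {x | quadraticChar (ZMod p) x = 1}

def halfSquares : Finset (ZMod p) := {x ∈ squares p | x.val ≤ p / 2}

def orderedSquarePairs : Finset (ZMod p × ZMod p) :=
  {q ∈ squares p ×ˢ squares p | q.1.val < q.2.val}

variable {p}

theorem mem_squares {x : ZMod p} : x ∈ squares p ↔ quadraticChar (ZMod p) x = 1 := by
  simp [squares]

theorem mem_halfSquares {x : ZMod p} :
    x ∈ halfSquares p ↔ x ∈ squares p ∧ x.val ≤ p / 2 := by
  simp [halfSquares]

theorem natCast_mem_squares {k : ℕ} : (k : ZMod p) ∈ squares p ↔ legendreSym p k = 1 := by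
  simp [mem_squares, legendreSym]

theorem ne_zero_of_mem_squares {x : ZMod p} (hx : x ∈ squares p) : x ≠ 0 := by
  rintro rfl
  simp [mem_squares] at hx

theorem quadraticChar_neg_one_of_mod_four (hp : p % 4 = 1) : quadraticChar (ZMod p) (-1) = 1 := by
  rw [quadraticChar_neg_one (by rw [ZMod.ringChar_zmod_n]; omega), ZMod.card,
    ZMod.χ₄_nat_one_mod_four hp]

theorem neg_mem_squares (hp : p % 4 = 1) {x : ZMod p} (hx : x ∈ squares p) :
    -x ∈ squares p := by
  rwa [mem_squares, neg_eq_neg_one_mul, map_mul, quadraticChar_neg_one_of_mod_four hp, one_mul,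
    ← mem_squares]

theorem val_neg_of_mem_squares {x : ZMod p} (hx : x ∈ squares p) : (-x).val = p - x.val := by
  have := NeZero.mk (ne_zero_of_mem_squares hx)
  exact ZMod.val_neg_of_ne_zero x

theorem val_pos_of_mem_squares {x : ZMod p} (hx : x ∈ squares p) : 0 < x.val :=
  Nat.pos_of_ne_zero ((ZMod.val_ne_zero x).2 (ne_zero_of_mem_squares hx))

theorem prod_sub_eq_prod_orderedSquarePairs {n : ℕ} (a : Fin n → ℕ) (hmono : StrictMono a)
    (hQR : ∀ i, a i ∈ Icc 1 (p - 1) ∧ legendreSym p (a i : ℤ) = 1)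
    (hsurj : ∀ m ∈ Icc 1 (p - 1), legendreSym p (m : ℤ) = 1 → ∃ i, a i = m) :
    ∏ j, ∏ i with i < j, ((a j : ZMod p) - a i) =
      ∏ q ∈ orderedSquarePairs p, (q.2 - q.1) := by
  have hval : ∀ i, (a i : ZMod p).val = a i := fun i =>
    ZMod.val_natCast_of_lt (by have := mem_Icc.1 (hQR i).1; omega)
  have himage : univ.image (fun i => (a i : ZMod p)) = squares p := by
    ext x
    simp only [mem_image, mem_univ, true_and]
    constructor
    · rintro ⟨i, rfl⟩
      exact natCast_mem_squares.2 (hQR i).2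
    · intro hx
      have hx0 := val_pos_of_mem_squares hx
      obtain ⟨i, hi⟩ := hsurj x.val (mem_Icc.2 ⟨hx0, by have := x.val_lt; omega⟩)
        (natCast_mem_squares.1 (by rwa [ZMod.natCast_zmod_val]))
      exact ⟨i, by rw [hi, ZMod.natCast_zmod_val]⟩
  have hkey : StrictMono (ZMod.val ∘ fun i => (a i : ZMod p)) := by
    simpa only [Function.comp_def, hval] using hmono
  rw [prod_prod_filter_lt_eq_prod_filter_key_lt _ ZMod.val hkey (fun u v => v - u), himage]
  rfl

theorem card_filter_orderedSquarePairs_half_lt_val_sub (hp : p % 4 = 1) :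
    #{q ∈ orderedSquarePairs p | p / 2 < (q.2 - q.1).val} =
      #{q ∈ halfSquares p ×ˢ halfSquares p | q.1.val + q.2.val ≤ p / 2} := by
  refine card_nbij' (fun q => (q.1, -q.2)) (fun q => (q.1, -q.2)) ?_ ?_
    (fun _ _ => by simp) (fun _ _ => by simp)
  · rintro ⟨u, v⟩ h
    simp only [orderedSquarePairs, mem_coe, mem_filter, mem_product] at h
    obtain ⟨⟨⟨hu, hv⟩, huv⟩, hhalf⟩ := h
    rw [ZMod.val_sub huv.le] at hhalf
    have := val_neg_of_mem_squares hv
    have := v.val_lt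
    simp only [mem_coe, mem_filter, mem_product, mem_halfSquares]
    refine ⟨⟨⟨hu, by omega⟩, neg_mem_squares hp hv, by omega⟩, by omega⟩
  · rintro ⟨x, y⟩ h
    simp only [mem_coe, mem_filter, mem_product, mem_halfSquares] at h
    obtain ⟨⟨⟨hx, hx'⟩, hy, hy'⟩, hxy⟩ := h
    have := val_neg_of_mem_squares hy
    have := val_pos_of_mem_squares hy
    have hlt : x.val < (-y).val := by omega
    simp only [orderedSquarePairs, mem_coe, mem_filter, mem_product]
    refine ⟨⟨⟨hx, neg_mem_squares hp hy⟩, hlt⟩, ?_⟩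
    rw [ZMod.val_sub hlt.le]
    omega

theorem prod_orderedSquarePairs_natAbs_valMinAbs_sub (hp : p % 4 = 1) :
    ∏ q ∈ orderedSquarePairs p, (q.2 - q.1).valMinAbs.natAbs =
      ∏ q ∈ halfSquares p ×ˢ squares p with q.1 + q.2 ≠ 0,
        (q.1 + q.2).valMinAbs.natAbs := by
  refine prod_nbij' (fun q => if q.1.val ≤ p / 2 then (q.1, -q.2) else (-q.1, q.2))
    (fun q => if q.1.val < (-q.2).val then (q.1, -q.2) else (-q.1, q.2)) ?_ ?_ ?_ ?_ ?_
  · rintro ⟨u, v⟩ h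
    simp only [orderedSquarePairs, mem_filter, mem_product] at h
    obtain ⟨⟨hu, hv⟩, huv⟩ := h
    have hne : v - u ≠ 0 := sub_ne_zero.2 fun h => huv.ne' (congrArg ZMod.val h)
    have := val_neg_of_mem_squares hu
    dsimp only
    split_ifs with hhalf <;> simp only [mem_filter, mem_product, mem_halfSquares]
    · refine ⟨⟨⟨hu, hhalf⟩, neg_mem_squares hp hv⟩, ?_⟩
      rwa [← sub_eq_add_neg, ← neg_sub, neg_ne_zero]
    · exact ⟨⟨⟨neg_mem_squares hp hu, by omega⟩, hv⟩, by rwa [neg_add_eq_sub]⟩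
  · rintro ⟨x, s⟩ h
    simp only [mem_filter, mem_product, mem_halfSquares] at h
    obtain ⟨⟨⟨hx, hxhalf⟩, hs⟩, hxs⟩ := h
    have hne : x.val ≠ (-s).val :=
      fun h => hxs (add_eq_zero_iff_eq_neg.2 (ZMod.val_injective p h))
    have := val_neg_of_mem_squares hx
    have := val_neg_of_mem_squares hs
    dsimp only
    split_ifs with hlt <;> simp only [orderedSquarePairs, mem_filter, mem_product]
    · exact ⟨⟨hx, neg_mem_squares hp hs⟩, hlt⟩
    · exact ⟨⟨neg_mem_squares hp hx, hs⟩, by omega⟩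
  · rintro ⟨u, v⟩ h
    simp only [orderedSquarePairs, mem_filter, mem_product] at h
    have := val_neg_of_mem_squares h.1.1
    have := val_neg_of_mem_squares h.1.2
    by_cases hhalf : u.val ≤ p / 2
    · simp [hhalf, h.2]
    · have : ¬ (-u).val < (-v).val := by omega
      simp [hhalf, this]
  · rintro ⟨x, s⟩ h
    simp only [mem_filter, mem_product, mem_halfSquares] at h
    have := val_neg_of_mem_squares h.1.1.1
    have := val_pos_of_mem_squares h.1.1.1
    by_cases hlt : x.val < (-s).val
    · simp [hlt, h.1.1.2]
    · have : ¬ (-x).val ≤ p / 2 := by omega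
      simp [hlt, this]
  · rintro ⟨u, v⟩ -
    split_ifs <;> dsimp only
    · rw [← ZMod.natAbs_valMinAbs_neg (v - u), neg_sub, sub_eq_add_neg]
    · rw [neg_add_eq_sub]

theorem card_filter_natAbs_valMinAbs_add_eq (hp : p % 4 = 1) {c : ℕ} (hc0 : 0 < c)
    (hc : c ≤ p / 2) :
    #{q ∈ {q ∈ halfSquares p ×ˢ squares p | q.1 + q.2 ≠ 0} |
        (q.1 + q.2).valMinAbs.natAbs = c} =
      #{x : ZMod p | quadraticChar (ZMod p) x = 1 ∧ quadraticChar (ZMod p) (c - x) = 1} := by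
  have hcF := natCast_ne_neg_natCast (by omega : p % 2 = 1) hc0 hc
  have hcF0 : (c : ZMod p) ≠ 0 := fun h => hcF (by rw [h, neg_zero])
  have hfiber : ∀ z : ZMod p, z.valMinAbs.natAbs = c ↔ z = c ∨ z = -c :=
    fun z => natAbs_valMinAbs_eq_iff hc z
  symm
  -- `y ↦ ±(y, c - y)`, the sign putting the first entry in the lower half
  refine card_nbij' (fun y => if y.val ≤ p / 2 then (y, c - y) else (-y, y - c))
    (fun q => if q.1 + q.2 = c then q.1 else -q.1) ?_ ?_ ?_ ?_
  · intro y hy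
    simp only [mem_coe, mem_filter, mem_univ, true_and, ← mem_squares] at hy
    have := val_neg_of_mem_squares hy.1
    have := y.val_lt
    dsimp only
    split_ifs with hhalf <;> simp only [mem_coe, mem_filter, mem_product, mem_halfSquares, hfiber]
    · rw [add_sub_cancel]
      exact ⟨⟨⟨⟨hy.1, hhalf⟩, hy.2⟩, hcF0⟩, Or.inl rfl⟩
    · rw [show -y + (y - c) = -c by ring, neg_ne_zero, ← neg_sub]
      exact ⟨⟨⟨⟨neg_mem_squares hp hy.1, by omega⟩, neg_mem_squares hp hy.2⟩, hcF0⟩,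
        Or.inr rfl⟩
  · rintro ⟨x, s⟩ h
    simp only [mem_coe, mem_filter, mem_product, mem_halfSquares, hfiber] at h
    obtain ⟨⟨⟨⟨hx, -⟩, hs⟩, -⟩, hxs⟩ := h
    simp only [mem_coe, mem_filter, mem_univ, true_and, ← mem_squares]
    split_ifs with hc'
    · rw [← hc', add_sub_cancel_left]
      exact ⟨hx, hs⟩
    · have hsum : (c : ZMod p) - -x = -s := by linear_combination hxs.resolve_left hc'
      rw [hsum]
      exact ⟨neg_mem_squares hp hx, neg_mem_squares hp hs⟩
  · intro y _
    by_cases hhalf : y.val ≤ p / 2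
    · simp [hhalf]
    · have hsum : -y + (y - c) ≠ c := by rw [show -y + (y - c) = -c by ring]; exact hcF.symm
      simp [hhalf, hsum]
  · rintro ⟨x, s⟩ h
    simp only [mem_coe, mem_filter, mem_product, mem_halfSquares, hfiber] at h
    obtain ⟨⟨⟨⟨hx, hxhalf⟩, hs⟩, -⟩, hxs⟩ := h
    have := val_neg_of_mem_squares hx
    have := val_pos_of_mem_squares hx
    by_cases hc' : x + s = c
    · simp only [hc', hxhalf, if_true, Prod.mk.injEq, true_and]
      rw [← hc', add_sub_cancel_left]
    · have hneg : ¬ (-x).val ≤ p / 2 := by omega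
      simp only [hc', hneg, if_false, neg_neg, Prod.mk.injEq, true_and]
      linear_combination -hxs.resolve_left hc'

theorem card_quadraticChar_eq_one_and_natCast_sub (hp : p % 4 = 1) {c : ℕ} (hc0 : 0 < c)
    (hc : c ≤ p / 2) :
    #{x : ZMod p | quadraticChar (ZMod p) x = 1 ∧ quadraticChar (ZMod p) (c - x) = 1} =
      (p - 5) / 4 + if legendreSym p c = -1 then 1 else 0 := by
  have hp2 := (Fact.out : p.Prime).two_le
  have hcF0 : (c : ZMod p) ≠ 0 := by
    rw [Ne, ZMod.natCast_eq_zero_iff]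
    exact fun h => absurd (Nat.le_of_dvd hc0 h) (by omega)
  have hcount := card_quadraticChar_eq_one_and_sub
    (by rw [ZMod.ringChar_zmod_n]; omega : ringChar (ZMod p) ≠ 2) hcF0
  rw [ZMod.card, quadraticChar_neg_one_of_mod_four hp] at hcount
  have hleg : legendreSym p c = quadraticChar (ZMod p) c := by simp [legendreSym]
  rw [hleg]
  rcases quadraticChar_dichotomy hcF0 with h | h <;> rw [h] at hcount ⊢
  · rw [if_neg (by norm_num)]
    omega
  · rw [if_pos rfl]
    omega

theorem prod_natAbs_valMinAbs_add (hp : p % 4 = 1) :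
    ∏ q ∈ halfSquares p ×ˢ squares p with q.1 + q.2 ≠ 0, (q.1 + q.2).valMinAbs.natAbs =
      (p / 2).factorial ^ ((p - 5) / 4) *
        ∏ c ∈ (Icc 1 (p / 2)).filter (fun c : ℕ => legendreSym p c = -1), c := by
  have hmaps : ∀ q ∈ {q ∈ halfSquares p ×ˢ squares p | q.1 + q.2 ≠ 0},
      (q.1 + q.2).valMinAbs.natAbs ∈ Icc 1 (p / 2) := by
    intro q hq
    rw [mem_filter] at hq
    rw [mem_Icc, Nat.one_le_iff_ne_zero, Ne, Int.natAbs_eq_zero, ZMod.valMinAbs_eq_zero]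
    exact ⟨hq.2, ZMod.natAbs_valMinAbs_le _⟩
  rw [prod_eq_prod_pow_card_filter_eq hmaps, ← prod_Icc_pow_add_ite_eq]
  refine prod_congr rfl fun c hc => ?_
  rw [mem_Icc] at hc
  rw [card_filter_natAbs_valMinAbs_add_eq hp hc.1 hc.2,
    card_quadraticChar_eq_one_and_natCast_sub hp hc.1 hc.2]

theorem card_filter_legendreSym_eq_card_halfSquares :
    #{q ∈ Icc 1 (p / 2) ×ˢ Icc 1 (p / 2) |
        q.1 + q.2 ≤ p / 2 ∧ legendreSym p (q.1 : ℤ) = 1 ∧ legendreSym p (q.2 : ℤ) = 1} =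
      #{q ∈ halfSquares p ×ˢ halfSquares p | q.1.val + q.2.val ≤ p / 2} := by
  have hp2 := (Fact.out : p.Prime).two_le
  refine card_nbij' (fun q => ((q.1 : ZMod p), (q.2 : ZMod p))) (fun q => (q.1.val, q.2.val))
    ?_ ?_ ?_ ?_
  · rintro ⟨x, y⟩ h
    simp only [mem_coe, mem_filter, mem_product, mem_Icc] at h
    obtain ⟨⟨hx, hy⟩, hxy, hlx, hly⟩ := h
    simp only [mem_coe, mem_filter, mem_product, mem_halfSquares, natCast_mem_squares,
      ZMod.val_natCast_of_lt (by omega : x < p), ZMod.val_natCast_of_lt (by omega : y < p)]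
    exact ⟨⟨⟨hlx, hx.2⟩, hly, hy.2⟩, hxy⟩
  · rintro ⟨x, y⟩ h
    simp only [mem_coe, mem_filter, mem_product, mem_halfSquares] at h
    obtain ⟨⟨⟨hx, hx'⟩, hy, hy'⟩, hxy⟩ := h
    have := val_pos_of_mem_squares hx
    have := val_pos_of_mem_squares hy
    simp only [mem_coe, mem_filter, mem_product, mem_Icc]
    refine ⟨⟨⟨by omega, hx'⟩, by omega, hy'⟩, hxy, ?_, ?_⟩ <;>
      rw [← natCast_mem_squares, ZMod.natCast_zmod_val] <;> assumption
  · rintro ⟨x, y⟩ h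
    simp only [mem_coe, mem_filter, mem_product, mem_Icc] at h
    simp [ZMod.val_natCast_of_lt (by omega : x < p), ZMod.val_natCast_of_lt (by omega : y < p)]
  · rintro ⟨x, y⟩ -
    simp

end Squares

theorem stmt_17 (p n : ℕ) [Fact p.Prime] (hp4 : p % 4 = 1) (hpn : p = 2 * n + 1)
    (a : Fin n → ℕ) (hmono : StrictMono a)
    (hQR : ∀ i, a i ∈ Finset.Icc 1 (p - 1) ∧ legendreSym p (a i : ℤ) = 1)
    (hsurj : ∀ m ∈ Finset.Icc 1 (p - 1), legendreSym p (m : ℤ) = 1 → ∃ i, a i = m) :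
    (∏ j : Fin n, ∏ i ∈ Finset.univ.filter (fun i : Fin n => i < j),
        ((a j : ℤ) - (a i : ℤ))) ≡
      (-1) ^ (((Finset.Icc 1 n ×ˢ Finset.Icc 1 n).filter
          (fun q : ℕ × ℕ => q.1 + q.2 ≤ n ∧
            legendreSym p (q.1 : ℤ) = 1 ∧ legendreSym p (q.2 : ℤ) = 1)).card) *
        (n.factorial : ℤ) ^ ((p - 5) / 4) *
        ∏ k ∈ (Finset.Icc 1 n).filter (fun k : ℕ => legendreSym p (k : ℤ) = -1), (k : ℤ)
      [ZMOD p] := by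
  obtain rfl : n = p / 2 := by omega
  rw [← ZMod.intCast_eq_intCast_iff]
  push_cast
  rw [prod_sub_eq_prod_orderedSquarePairs a hmono hQR hsurj,
    prod_eq_neg_one_pow_mul_prod_natAbs_valMinAbs,
    card_filter_orderedSquarePairs_half_lt_val_sub hp4,
    prod_orderedSquarePairs_natAbs_valMinAbs_sub hp4, prod_natAbs_valMinAbs_add hp4,
    card_filter_legendreSym_eq_card_halfSquares]
  push_cast
  ring
end

section
/- Let p be an odd prime and a an integer coprime to p. Then the sign of the permutation of Z/pZ given by multiplication by a equals the Legendre symbol (a/p). -/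
/-!
Both `u ↦ sign (x ↦ u * x)` and the quadratic character are homomorphisms `Fˣ →* ℤˣ` on the
cyclic group `Fˣ` of a finite field of odd order, and a cyclic group has at most one nontrivial
homomorphism to `ℤˣ`. The quadratic character is nontrivial, and so is the sign: multiplication
by a generator of `Fˣ` fixes `0` and cycles through the `q - 1` nonzero elements, an even number.
-/

open Equiv Equiv.Perm Subgroup

theorem MonoidHom.eq_of_ne_one_of_isCyclic {G : Type*} [Group G] [IsCyclic G]
    {φ ψ : G →* ℤˣ} (hφ : φ ≠ 1) (hψ : ψ ≠ 1) : φ = ψ := by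
  obtain ⟨g, hg⟩ := IsCyclic.exists_generator (α := G)
  have apply_generator : ∀ χ : G →* ℤˣ, χ ≠ 1 → χ g = -1 := fun χ hχ =>
    (Int.units_eq_one_or _).resolve_left fun h =>
      hχ ((MonoidHom.eq_iff_eq_on_generator hg χ 1).2 h)
  exact (MonoidHom.eq_iff_eq_on_generator hg φ ψ).2
    ((apply_generator φ hφ).trans (apply_generator ψ hψ).symm)

section FiniteField

variable {F : Type*} [Field F] [Fintype F] [DecidableEq F]

theorem support_toPerm_units {u : Fˣ} (hu : u ≠ 1) :
    (MulAction.toPerm u : Perm F).support = Finset.univ.erase 0 := by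
  ext x
  rw [mem_support, Finset.mem_erase, and_iff_left (Finset.mem_univ x)]
  refine ⟨fun h hx => h (by simp [hx]), fun hx h => hu (Units.ext ?_)⟩
  exact (mul_eq_right₀ hx).1 h

theorem isCycle_toPerm_of_forall_mem_zpowers {g : Fˣ} (hg : ∀ u, u ∈ zpowers g) (hg1 : g ≠ 1) :
    (MulAction.toPerm g : Perm F).IsCycle := by
  refine ⟨1, fun h => hg1 (Units.ext (by simpa [Units.smul_def] using h)), fun y hy => ?_⟩
  have hy0 : y ≠ 0 := by
    rw [← mem_support, support_toPerm_units hg1] at hy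
    exact Finset.ne_of_mem_erase hy
  obtain ⟨n, hn⟩ := mem_zpowers_iff.1 (hg (Units.mk0 y hy0))
  refine ⟨n, ?_⟩
  change (MulAction.toPermHom Fˣ F g ^ n) 1 = y
  rw [← map_zpow, hn]
  simp [Units.smul_def]

theorem sign_toPerm_of_forall_mem_zpowers (hF : ringChar F ≠ 2) {g : Fˣ}
    (hg : ∀ u, u ∈ zpowers g) : sign (MulAction.toPerm g : Perm F) = -1 := by
  have hg1 : g ≠ 1 := by
    intro h
    obtain ⟨n, hn⟩ := mem_zpowers_iff.1 (hg (-1))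
    rw [h, one_zpow] at hn
    exact Ring.neg_one_ne_one_of_char_ne_two hF (congrArg Units.val hn).symm
  have hcard : Even (Finset.univ.erase (0 : F)).card := by
    rw [Finset.card_erase_of_mem (Finset.mem_univ 0), Finset.card_univ]
    have := FiniteField.odd_card_of_char_ne_two hF
    rw [Nat.even_iff]
    omega
  rw [(isCycle_toPerm_of_forall_mem_zpowers hg hg1).sign, support_toPerm_units hg1,
    hcard.neg_one_pow]

theorem sign_toPerm_units_eq_quadraticChar (hF : ringChar F ≠ 2) (u : Fˣ) :
    (sign (MulAction.toPerm u : Perm F) : ℤ) = quadraticChar F u := by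
  have hsign : sign.comp (MulAction.toPermHom Fˣ F) ≠ 1 := by
    obtain ⟨g, hg⟩ := IsCyclic.exists_generator (α := Fˣ)
    refine ne_of_apply_ne (fun χ : Fˣ →* ℤˣ => χ g) ?_
    simp [sign_toPerm_of_forall_mem_zpowers hF hg]
  have hquad : (quadraticChar F).toUnitHom ≠ 1 := by
    obtain ⟨a, ha⟩ := quadraticChar_exists_neg_one' hF
    refine ne_of_apply_ne (fun χ : Fˣ →* ℤˣ => (χ a : ℤ)) ?_
    simp [ha]
  rw [← MulChar.coe_toUnitHom, ← MonoidHom.eq_of_ne_one_of_isCyclic hsign hquad]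
  rfl

end FiniteField

theorem stmt_19 (p : ℕ) [Fact p.Prime] (hodd : Odd p) (a : ℤ) (ha : IsCoprime a (p : ℤ))
    (e : Equiv.Perm (ZMod p)) (he : ∀ x : ZMod p, e x = (a : ZMod p) * x) :
    ((Equiv.Perm.sign e : ℤ)) = legendreSym p a := by
  have hp : ringChar (ZMod p) ≠ 2 := by
    rw [ZMod.ringChar_zmod_n]
    rintro rfl
    exact Nat.not_odd_iff_even.2 even_two hodd
  have he' : e = MulAction.toPerm (ZMod.unitOfIsCoprime a ha) := Equiv.ext he
  rw [he', sign_toPerm_units_eq_quadraticChar hp, ZMod.coe_unitOfIsCoprime, legendreSym]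
end
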